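/- Let G be a simple even plane triangulation and C a separating induced 3-cycle in G, with the two components of G − V(C) denoted C+ and C−. Set G1 = G − C+ and G2 = G − C−. Suppose {X1, Y1} is a partition of V(G1) and {X2, Y2} is a partition of V(G2) such that G1[X1], G1[Y1], G2[X2], G2[Y2] are all trees and X1 ∩ V(C) = X2 ∩ V(C). Then {X1 ∪ X2, Y1 ∪ Y2} is a partition of V(G) into two sets each inducing a tree in G. -/

import Mathlib

open SimpleGraph

/-- A combinatorial plane triangulation: a connected simple graph together with a
collection of triangular faces, each edge lying on exactly two faces, satisfying
Euler's formula `|V| - |E| + |F| = 2`. -/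
structure IsPlaneTriangulation {V : Type*} [Fintype V] [DecidableEq V]
    (G : SimpleGraph V) [DecidableRel G.Adj] (faces : Finset (Finset V)) : Prop where
  connected : G.Connected
  card_ge : 4 ≤ Fintype.card V
  face_card : ∀ f ∈ faces, f.card = 3
  face_clique : ∀ f ∈ faces, ∀ u ∈ f, ∀ v ∈ f, u ≠ v → G.Adj u v
  edge_two_faces : ∀ u v : V, G.Adj u v → (faces.filter (fun f => u ∈ f ∧ v ∈ f)).card = 2
  euler : (Fintype.card V : ℤ) - G.edgeFinset.card + faces.card = 2

/-!
Each glued set is a union `A ∪ B` of two induced trees, `A` on the `C⁻` side and `B` on the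
`C⁺` side, meeting in a nonempty part of the triangle (nonempty because no tree contains a
triangle), with no edge between `A \ B ⊆ C⁻` and `B \ A ⊆ C⁺`. Such a union is connected, and
it is acyclic by counting: `G[A ∩ B]` is a connected part of the tree `G[A]`, hence a tree, and
the edges of `G[A ∪ B]` are those of `G[A]` and `G[B]`, which share exactly the edges of
`G[A ∩ B]`; so `|E| + 1 = |V|` passes to the union by inclusion–exclusion.
-/

namespace Set

variable {V : Type*} {S P M X₁ X₂ Y₁ Y₂ : Set V}

lemma inter_eq_inter_of_agree (hPM : P ∪ M = Sᶜ) (h₁ : X₁ ⊆ Pᶜ) (h₂ : X₂ ⊆ Mᶜ)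
    (hagree : X₁ ∩ S = X₂ ∩ S) : X₁ ∩ X₂ = X₁ ∩ S := by
  simp only [Set.ext_iff, Set.subset_def, Set.mem_union, Set.mem_inter_iff,
    Set.mem_compl_iff] at *
  grind

lemma sdiff_subset_of_agree (hPM : P ∪ M = Sᶜ) (h₁ : X₁ ⊆ Pᶜ) (hagree : X₁ ∩ S = X₂ ∩ S) :
    X₁ \ X₂ ⊆ M := by
  simp only [Set.ext_iff, Set.subset_def, Set.mem_union, Set.mem_inter_iff,
    Set.mem_compl_iff] at *
  grind

lemma inter_eq_inter_of_agree_compl (hdisj₁ : Disjoint X₁ Y₁) (hXY₁ : X₁ ∪ Y₁ = Pᶜ)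
    (hdisj₂ : Disjoint X₂ Y₂) (hXY₂ : X₂ ∪ Y₂ = Mᶜ) (hS₁ : S ⊆ Pᶜ) (hS₂ : S ⊆ Mᶜ)
    (hagree : X₁ ∩ S = X₂ ∩ S) : Y₁ ∩ S = Y₂ ∩ S := by
  rw [Set.disjoint_left] at hdisj₁ hdisj₂
  simp only [Set.ext_iff, Set.subset_def, Set.mem_union, Set.mem_inter_iff,
    Set.mem_compl_iff] at *
  grind

lemma disjoint_union_union_of_agree (hPM : P ∪ M = Sᶜ) (hdisj₁ : Disjoint X₁ Y₁)
    (hXY₁ : X₁ ∪ Y₁ = Pᶜ) (hdisj₂ : Disjoint X₂ Y₂) (hXY₂ : X₂ ∪ Y₂ = Mᶜ)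
    (hagree : X₁ ∩ S = X₂ ∩ S) : Disjoint (X₁ ∪ X₂) (Y₁ ∪ Y₂) := by
  rw [Set.disjoint_left] at *
  simp only [Set.ext_iff, Set.mem_union, Set.mem_inter_iff, Set.mem_compl_iff] at *
  grind

lemma union_union_union_eq_univ (hPM : Disjoint P M) (hXY₁ : X₁ ∪ Y₁ = Pᶜ)
    (hXY₂ : X₂ ∪ Y₂ = Mᶜ) : (X₁ ∪ X₂) ∪ (Y₁ ∪ Y₂) = univ := by
  rw [Set.disjoint_left] at hPM
  simp only [Set.ext_iff, Set.mem_union, Set.mem_compl_iff, Set.mem_univ, iff_true] at *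
  grind

end Set

namespace SimpleGraph

variable {V : Type*} {G : SimpleGraph V}

lemma ncard_edgeSet_induce (s : Set V) :
    (G.induce s).edgeSet.ncard = ((⊤ : G.Subgraph).induce s).edgeSet.ncard := by
  rw [induce_eq_coe_induce_top, ← Subgraph.image_coe_edgeSet_coe,
    Set.ncard_image_of_injective _ (Sym2.map.injective Subtype.val_injective)]
  rfl

lemma isTree_induce_iff [Finite V] {s : Set V} :
    (G.induce s).IsTree ↔
      (G.induce s).Connected ∧ ((⊤ : G.Subgraph).induce s).edgeSet.ncard + 1 = s.ncard := by
  rw [isTree_iff_connected_and_card, Nat.card_coe_set_eq, ← ncard_edgeSet_induce,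
    Nat.card_coe_set_eq]

lemma IsTree.induce_of_connected {s t : Set V} (ht : (G.induce t).IsTree) (hst : s ⊆ t)
    (hs : (G.induce s).Connected) : (G.induce s).IsTree :=
  ⟨hs, ht.isAcyclic.embedding (induceHomOfLE G hst)⟩

lemma edgeSet_induce_top_inter (A B : Set V) :
    ((⊤ : G.Subgraph).induce (A ∩ B)).edgeSet =
      ((⊤ : G.Subgraph).induce A).edgeSet ∩ ((⊤ : G.Subgraph).induce B).edgeSet := by
  ext e
  induction e using Sym2.ind with
  | _ u v => simp only [Set.mem_inter_iff, Subgraph.mem_edgeSet, Subgraph.induce_adj]; tauto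

lemma edgeSet_induce_top_union {A B : Set V} (hcross : ∀ u ∈ A \ B, ∀ v ∈ B \ A, ¬ G.Adj u v) :
    ((⊤ : G.Subgraph).induce (A ∪ B)).edgeSet =
      ((⊤ : G.Subgraph).induce A).edgeSet ∪ ((⊤ : G.Subgraph).induce B).edgeSet := by
  ext e
  induction e using Sym2.ind with
  | _ u v =>
    simp only [Set.mem_union, Subgraph.mem_edgeSet, Subgraph.induce_adj, Subgraph.top_adj]
    have huv := hcross u
    have hvu := hcross v
    have := G.adj_symm (u := u) (v := v)
    simp only [Set.mem_sdiff] at huv hvu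
    tauto

lemma isTree_induce_union [Finite V] {A B : Set V} (hA : (G.induce A).IsTree)
    (hB : (G.induce B).IsTree) (hAB : (G.induce (A ∩ B)).Connected)
    (hcross : ∀ u ∈ A \ B, ∀ v ∈ B \ A, ¬ G.Adj u v) : (G.induce (A ∪ B)).IsTree := by
  have hI : (G.induce (A ∩ B)).IsTree := hA.induce_of_connected Set.inter_subset_left hAB
  have hconn : (G.induce (A ∪ B)).Connected :=
    induce_union_connected hA.connected.preconnected hB.connected.preconnected
      (Set.nonempty_coe_sort.mp hAB.nonempty)
  rw [isTree_induce_iff] at hA hB hI ⊢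
  refine ⟨hconn, ?_⟩
  have hcardE := Set.ncard_union_add_ncard_inter ((⊤ : G.Subgraph).induce A).edgeSet
    ((⊤ : G.Subgraph).induce B).edgeSet
  have hcardV := Set.ncard_union_add_ncard_inter A B
  rw [← edgeSet_induce_top_union hcross, ← edgeSet_induce_top_inter] at hcardE
  omega

lemma connected_induce_of_isClique {s : Set V} (h : G.IsClique s) (hs : s.Nonempty) :
    (G.induce s).Connected := by
  have := hs.to_subtype
  rw [induce_eq_top.mpr h]
  exact connected_top

lemma not_isAcyclic_induce_of_triangle {s : Set V} {a b c : V} (hab : G.Adj a b)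
    (hbc : G.Adj b c) (hac : G.Adj a c) (hs : {a, b, c} ⊆ s) : ¬ (G.induce s).IsAcyclic := by
  classical
  intro h
  have hmem : ∀ x ∈ ({a, b, c} : Set V), x ∈ s := hs
  refine h.cliqueFree le_rfl
    {⟨a, hmem a (by simp)⟩, ⟨b, hmem b (by simp)⟩, ⟨c, hmem c (by simp)⟩} ?_
  exact is3Clique_triple_iff.mpr ⟨hab, hac, hbc⟩

lemma inter_nonempty_of_triangle {X Y : Set V} {a b c : V} (hY : (G.induce Y).IsAcyclic)
    (hab : G.Adj a b) (hbc : G.Adj b c) (hac : G.Adj a c) (hS : {a, b, c} ⊆ X ∪ Y) :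
    (X ∩ {a, b, c}).Nonempty := by
  by_contra hX
  refine not_isAcyclic_induce_of_triangle hab hbc hac (fun x hx ↦ ?_) hY
  exact (hS hx).resolve_left fun hxX ↦ hX ⟨x, hxX, hx⟩

lemma isTree_induce_union_of_agree [Finite V] {S P M X₁ X₂ : Set V} (hS : G.IsClique S)
    (hPM : P ∪ M = Sᶜ) (hsep : ∀ u ∈ P, ∀ v ∈ M, ¬ G.Adj u v) (h₁ : X₁ ⊆ Pᶜ) (h₂ : X₂ ⊆ Mᶜ)
    (hX₁ : (G.induce X₁).IsTree) (hX₂ : (G.induce X₂).IsTree) (hagree : X₁ ∩ S = X₂ ∩ S)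
    (hne : (X₁ ∩ S).Nonempty) : (G.induce (X₁ ∪ X₂)).IsTree := by
  refine isTree_induce_union hX₁ hX₂ ?_ fun u hu v hv hadj ↦ ?_
  · rw [Set.inter_eq_inter_of_agree hPM h₁ h₂ hagree]
    exact connected_induce_of_isClique (hS.subset Set.inter_subset_right) hne
  · have hvP := Set.sdiff_subset_of_agree (Set.union_comm P M ▸ hPM) h₂ hagree.symm hv
    exact hsep v hvP u (Set.sdiff_subset_of_agree hPM h₁ hagree hu) hadj.symm

end SimpleGraph

theorem glue_tree_partitions_general {V : Type*} [Fintype V]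
    (G : SimpleGraph V)
    (a b c : V) (hab : G.Adj a b) (hbc : G.Adj b c) (hac : G.Adj a c)
    (Cs : Set V) (hCs : Cs = {a, b, c})
    (Cp Cm : Set V)
    (hdisjC : Disjoint Cp Cm) (hcompl : Cp ∪ Cm = Csᶜ)
    (hsep : ∀ u ∈ Cp, ∀ v ∈ Cm, ¬ G.Adj u v)
    (X1 Y1 : Set V) (hdisj1 : Disjoint X1 Y1) (hunion1 : X1 ∪ Y1 = Cpᶜ)
    (hX1 : (G.induce X1).IsTree) (hY1 : (G.induce Y1).IsTree)
    (X2 Y2 : Set V) (hdisj2 : Disjoint X2 Y2) (hunion2 : X2 ∪ Y2 = Cmᶜ)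
    (hX2 : (G.induce X2).IsTree) (hY2 : (G.induce Y2).IsTree)
    (hagree : X1 ∩ Cs = X2 ∩ Cs) :
    Disjoint (X1 ∪ X2) (Y1 ∪ Y2) ∧ (X1 ∪ X2) ∪ (Y1 ∪ Y2) = Set.univ ∧
      (G.induce (X1 ∪ X2)).IsTree ∧ (G.induce (Y1 ∪ Y2)).IsTree := by
  subst hCs
  have hclique : G.IsClique {a, b, c} := by
    simp [isClique_insert, hab, hbc, hac, hab.ne, hbc.ne, hac.ne]
  have hCs : {a, b, c} = (Cp ∪ Cm)ᶜ := by rw [hcompl, compl_compl]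
  have hCsCp : {a, b, c} ⊆ Cpᶜ := hCs ▸ Set.compl_subset_compl.mpr Set.subset_union_left
  have hCsCm : {a, b, c} ⊆ Cmᶜ := hCs ▸ Set.compl_subset_compl.mpr Set.subset_union_right
  have hagreeY : Y1 ∩ {a, b, c} = Y2 ∩ {a, b, c} :=
    Set.inter_eq_inter_of_agree_compl hdisj1 hunion1 hdisj2 hunion2 hCsCp hCsCm hagree
  have hXne : (X1 ∩ {a, b, c}).Nonempty :=
    inter_nonempty_of_triangle hY1.isAcyclic hab hbc hac (hunion1 ▸ hCsCp)
  have hYne : (Y1 ∩ {a, b, c}).Nonempty :=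
    inter_nonempty_of_triangle hX1.isAcyclic hab hbc hac (by rwa [Set.union_comm, hunion1])
  refine ⟨Set.disjoint_union_union_of_agree hcompl hdisj1 hunion1 hdisj2 hunion2 hagree,
    Set.union_union_union_eq_univ hdisjC hunion1 hunion2, ?_, ?_⟩
  · exact isTree_induce_union_of_agree hclique hcompl hsep (hunion1 ▸ Set.subset_union_left)
      (hunion2 ▸ Set.subset_union_left) hX1 hX2 hagree hXne
  · exact isTree_induce_union_of_agree hclique hcompl hsep (hunion1 ▸ Set.subset_union_right)
      (hunion2 ▸ Set.subset_union_right) hY1 hY2 hagreeY hYne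

/-- Gluing tree partitions along a separating triangle: if `C` is a separating
induced 3-cycle of an even plane triangulation `G` with components `C⁺`, `C⁻` of
`G − V(C)`, and the graphs `G₁ = G − C⁺` and `G₂ = G − C⁻` admit tree partitions
`{X1, Y1}` resp. `{X2, Y2}` agreeing on `V(C)`, then `{X1 ∪ X2, Y1 ∪ Y2}` is a
tree partition of `G`. -/
theorem glue_tree_partitions {V : Type*} [Fintype V] [DecidableEq V]
    (G : SimpleGraph V) [DecidableRel G.Adj] (faces : Finset (Finset V))
    (hT : IsPlaneTriangulation G faces) (heven : ∀ v : V, Even (G.degree v))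
    (a b c : V) (hab : G.Adj a b) (hbc : G.Adj b c) (hac : G.Adj a c)
    (Cs : Set V) (hCs : Cs = {a, b, c})
    (Cp Cm : Set V) (hCp : Cp.Nonempty) (hCm : Cm.Nonempty)
    (hdisjC : Disjoint Cp Cm) (hcompl : Cp ∪ Cm = Csᶜ)
    (hCpconn : (G.induce Cp).Connected) (hCmconn : (G.induce Cm).Connected)
    (hsep : ∀ u ∈ Cp, ∀ v ∈ Cm, ¬ G.Adj u v)
    (X1 Y1 : Set V) (hdisj1 : Disjoint X1 Y1) (hunion1 : X1 ∪ Y1 = Cpᶜ)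
    (hX1 : (G.induce X1).IsTree) (hY1 : (G.induce Y1).IsTree)
    (X2 Y2 : Set V) (hdisj2 : Disjoint X2 Y2) (hunion2 : X2 ∪ Y2 = Cmᶜ)
    (hX2 : (G.induce X2).IsTree) (hY2 : (G.induce Y2).IsTree)
    (hagree : X1 ∩ Cs = X2 ∩ Cs) :
    Disjoint (X1 ∪ X2) (Y1 ∪ Y2) ∧ (X1 ∪ X2) ∪ (Y1 ∪ Y2) = Set.univ ∧
      (G.induce (X1 ∪ X2)).IsTree ∧ (G.induce (Y1 ∪ Y2)).IsTree :=
  glue_tree_partitions_general G a b c hab hbc hac Cs hCs Cp Cm hdisjC hcompl hsep X1 Y1 hdisj1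
    hunion1 hX1 hY1 X2 Y2 hdisj2 hunion2 hX2 hY2 hagree
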